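/- For even n ≥ 4, every path in the binary necklace graph NG(n) contains at most BPL(n) = (1/n)·Σ_{d | n, d odd} φ(d)·2^{n/d} + 1 vertices. -/

import Mathlib

/-!
The parity of the number of `1`s is a proper 2-colouring of `NG n`: a de Bruijn arc shifts a word
and rewrites its last bit, and when that bit is left unchanged the arc stays inside one necklace.
A path alternates colours, so it has at most `2 · #(odd necklaces) + 1` vertices. Burnside's
lemma for the rotation action on odd-weight words counts the odd necklaces: a rotation of additive
order `d` fixes the words of period `n / d`, whose weight is `d` times the weight of one period,
so it fixes `2 ^ (n / d - 1)` odd-weight words if `d` is odd and none otherwise; there are `φ d`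
rotations of order `d`. Hence
`n · #(odd necklaces) = ∑_{d ∣ n, d odd} φ d · 2 ^ (n / d - 1)`, which says exactly that
`BPL n = 2 · #(odd necklaces) + 1`.
-/

/-- Two binary strings of length `n` are rotation-equivalent. -/
def necklaceRel (n : ℕ) (f g : Fin n → Bool) : Prop :=
  ∃ k : ℕ, g = f ∘ ⇑((finRotate n) ^ k)

/-- De Bruijn arc: `g i = f (i+1)` for all `i < n - 1`. -/
def dBArc (n : ℕ) (f g : Fin n → Bool) : Prop :=
  ∀ i : Fin n, (h : i.val + 1 < n) → g i = f ⟨i.val + 1, h⟩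

/-- The necklace graph on rotation classes of binary strings of length `n`. -/
def NG (n : ℕ) : SimpleGraph (Quot (necklaceRel n)) where
  Adj X Y := X ≠ Y ∧ ∃ f g : Fin n → Bool,
    Quot.mk _ f = X ∧ Quot.mk _ g = Y ∧ (dBArc n f g ∨ dBArc n g f)
  symm := by
    constructor
    rintro X Y ⟨hne, f, g, hf, hg, h⟩
    exact ⟨hne.symm, g, f, hg, hf, h.symm⟩
  loopless := by constructor; rintro X ⟨hne, -⟩; exact hne rfl

/-- The upper bound on the number of vertices of a path in `NG n` for even `n`. -/
def BPL (n : ℕ) : ℕ :=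
  (∑ d ∈ n.divisors.filter (fun d => Odd d), d.totient * 2 ^ (n / d)) / n + 1

open Function Finset

section Weight

variable {ι κ : Type*} [Fintype ι]

def weight (f : ι → Bool) : ℕ := ∑ i, (f i).toNat

theorem weight_comp_equiv [Fintype κ] (f : ι → Bool) (e : κ ≃ ι) :
    weight (f ∘ e) = weight f :=
  e.sum_comp fun i => (f i).toNat

theorem weight_eq_natCard (f : ι → Bool) : weight f = Nat.card {i // f i = true} := by
  classical
  rw [Nat.card_eq_fintype_card, Fintype.card_subtype, card_filter]
  exact sum_congr rfl fun i _ => by cases f i <;> rfl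

theorem weight_update_add [DecidableEq ι] (f : ι → Bool) (a : ι) (b : Bool) :
    weight (update f a b) + (f a).toNat = weight f + b.toNat := by
  have hrest : ∑ i ∈ {a}ᶜ, (update f a b i).toNat = ∑ i ∈ {a}ᶜ, (f i).toNat :=
    sum_congr rfl fun i hi => by rw [update_of_ne (by simpa using hi)]
  rw [weight, weight, Fintype.sum_eq_add_sum_compl a, Fintype.sum_eq_add_sum_compl a, hrest,
    update_self]
  ring

theorem odd_weight_update_not [DecidableEq ι] (f : ι → Bool) (a : ι) :
    Odd (weight (update f a (!f a))) ↔ ¬Odd (weight f) := by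
  have h := weight_update_add f a (!f a)
  cases hfa : f a <;> simp only [hfa, Bool.not_false, Bool.not_true, Bool.toNat_true,
    Bool.toNat_false, add_zero] at h ⊢
  · rw [h, Nat.odd_add_one]
  · rw [← h, Nat.odd_add_one, not_not]

theorem weight_cons {d : ℕ} (b : Bool) (f : Fin d → Bool) :
    weight (Fin.cons b f : Fin (d + 1) → Bool) = b.toNat + weight f := by
  simp [weight, Fin.sum_univ_succ]

theorem card_odd_weight_fin (d : ℕ) :
    Nat.card {f : Fin (d + 1) → Bool // Odd (weight f)} = 2 ^ d := by
  have odd_iff (b : Bool) (w : ℕ) : Odd (b.toNat + w) ↔ b = decide (Even w) := by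
    cases b <;> simp [add_comm 1, Nat.odd_add_one]
  let e : {f : Fin (d + 1) → Bool // Odd (weight f)} ≃ (Fin d → Bool) :=
    { toFun f := Fin.tail f.1
      invFun g := ⟨Fin.cons (decide (Even (weight g))) g, by rw [weight_cons, odd_iff]⟩
      left_inv f := by
        have h := f.2
        rw [← Fin.cons_self_tail f.1, weight_cons, odd_iff] at h
        exact Subtype.ext (by show Fin.cons _ (Fin.tail f.1) = f.1; rw [← h, Fin.cons_self_tail])
      right_inv g := Fin.tail_cons _ _ }
  rw [Nat.card_congr e, Nat.card_eq_fintype_card, Fintype.card_fun, Fintype.card_bool,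
    Fintype.card_fin]

theorem card_odd_weight [Nonempty ι] :
    Nat.card {f : ι → Bool // Odd (weight f)} = 2 ^ (Nat.card ι - 1) := by
  obtain ⟨d, hd⟩ : ∃ d, Fintype.card ι = d + 1 :=
    Nat.exists_eq_succ_of_ne_zero Fintype.card_ne_zero
  rw [Nat.card_eq_fintype_card (α := ι), hd, Nat.add_sub_cancel, ← card_odd_weight_fin d]
  let e := Fintype.equivFinOfCardEq hd
  exact Nat.card_congr ((e.arrowCongr (Equiv.refl Bool)).subtypeEquiv fun f => by
    rw [← weight_comp_equiv f e.symm]; rfl)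

end Weight

theorem List.IsChain.length_le_two_mul_countP_add_one {α : Type*} {p : α → Bool} :
    ∀ {l : List α}, l.IsChain (fun a b => p a ≠ p b) → l.length ≤ 2 * l.countP p + 1
  | [], _ | [_], _ => by simp
  | a :: b :: l, h => by
    obtain ⟨hab, h⟩ := List.isChain_cons_cons.mp h
    have ih : l.length ≤ 2 * l.countP p + 1 := length_le_two_mul_countP_add_one h.tail
    have hpair : (a :: b :: l).countP p = l.countP p + 1 := by
      cases ha : p a <;> cases hb : p b <;> simp_all
    simp only [List.length_cons, hpair]
    omega

theorem SimpleGraph.Walk.IsPath.length_support_le {V : Type*} [Finite V] {G : SimpleGraph V}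
    (P : V → Prop) (hP : ∀ ⦃x y⦄, G.Adj x y → ¬(P x ↔ P y)) {u v : V} {p : G.Walk u v}
    (hp : p.IsPath) : p.support.length ≤ 2 * Nat.card {x // P x} + 1 := by
  classical
  have := Fintype.ofFinite V
  have halt : p.support.IsChain (fun x y => decide (P x) ≠ decide (P y)) :=
    p.isChain_adj_support.imp fun x y hxy => by simpa using hP hxy
  have hcount : p.support.countP (fun x => decide (P x)) ≤ Nat.card {x // P x} := by
    rw [List.countP_eq_length_filter, ← List.toFinset_card_of_nodup (hp.support_nodup.filter _),
      Nat.card_eq_fintype_card, Fintype.card_subtype]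
    exact card_le_card fun x hx => by simpa using (List.mem_filter.mp (List.mem_toFinset.mp hx)).2
  have := halt.length_le_two_mul_countP_add_one
  omega

section Translation

variable {G : Type*} [AddGroup G]

theorem periodic_iff_leftRel_le_ker {β : Type*} {f : G → β} {k : G} :
    Periodic f k ↔ QuotientAddGroup.leftRel (AddSubgroup.zmultiples k) ≤ Setoid.ker f := by
  refine ⟨fun hf x y hxy => ?_, fun h x => (h (QuotientAddGroup.leftRel_apply.mpr ?_)).symm⟩
  · obtain ⟨m, hm⟩ := AddSubgroup.mem_zmultiples_iff.mp (QuotientAddGroup.leftRel_apply.mp hxy)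
    rw [Setoid.ker_def, ← add_neg_cancel_left x y, ← hm, hf.zsmul m x]
  · simp

variable [Fintype G]

theorem weight_comp_mk (H : AddSubgroup G) [Fintype (G ⧸ H)] (F : G ⧸ H → Bool) :
    weight (F ∘ QuotientAddGroup.mk) = Nat.card H * weight F := by
  rw [weight_eq_natCard, weight_eq_natCard, ← Nat.card_prod]
  exact Nat.card_congr (QuotientAddGroup.preimageMkEquivAddSubgroupProdSet H {q | F q = true})

variable (G) in
abbrev OddString : Type _ := {f : G → Bool // Odd (weight f)}

instance : AddAction G (OddString G) where
  vadd k x := ⟨fun i => x.1 (i + k), by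
    rw [show (fun i => x.1 (i + k)) = x.1 ∘ Equiv.addRight k from rfl, weight_comp_equiv]
    exact x.2⟩
  zero_vadd x := Subtype.ext <| funext fun i => congrArg x.1 (add_zero i)
  add_vadd a b x := Subtype.ext <| funext fun i => congrArg x.1 (add_assoc i a b).symm

theorem OddString.vadd_val (k : G) (x : OddString G) : (k +ᵥ x).1 = fun i => x.1 (i + k) := rfl

theorem OddString.mem_fixedBy_iff {k : G} {x : OddString G} :
    x ∈ AddAction.fixedBy (OddString G) k ↔ Periodic x.1 k := by
  rw [AddAction.mem_fixedBy, ← Subtype.val_inj, OddString.vadd_val, funext_iff]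
  rfl

end Translation

section Burnside

variable {G : Type*} [AddGroup G] [Fintype G]

theorem OddString.card_fixedBy (k : G) :
    Nat.card (AddAction.fixedBy (OddString G) k) =
      if Odd (addOrderOf k) then 2 ^ (Nat.card G / addOrderOf k - 1) else 0 := by
  classical
  set H := AddSubgroup.zmultiples k
  have hweight (F : G ⧸ H → Bool) :
      weight (F ∘ QuotientAddGroup.mk) = addOrderOf k * weight F := by
    rw [weight_comp_mk, Nat.card_zmultiples]
  let e : AddAction.fixedBy (OddString G) k ≃
      {F : G ⧸ H → Bool // Odd (addOrderOf k * weight F)} :=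
    { toFun x :=
        ⟨Quotient.lift x.1.1 (periodic_iff_leftRel_le_ker.mp (mem_fixedBy_iff.mp x.2)),
          by rw [← hweight]; exact x.1.2⟩
      invFun F := ⟨⟨F.1 ∘ QuotientAddGroup.mk, by rw [hweight]; exact F.2⟩,
        mem_fixedBy_iff.mpr <| periodic_iff_leftRel_le_ker.mpr fun _ _ h =>
          congrArg F.1 (Quotient.sound h)⟩
      left_inv _ := rfl
      right_inv F := Subtype.ext <| funext fun q => Quotient.inductionOn q fun _ => rfl }
  have hquot : Nat.card (G ⧸ H) = Nat.card G / addOrderOf k := by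
    rw [← AddSubgroup.index_mul_card H, Nat.card_zmultiples,
      Nat.mul_div_cancel _ (addOrderOf_pos k), AddSubgroup.index_eq_card]
  rw [Nat.card_congr e]
  split_ifs with hk
  · simp only [Nat.odd_mul, hk, true_and]
    rw [card_odd_weight, hquot]
  · simp [Nat.odd_mul, hk]

theorem OddString.card_orbits_mul_card :
    Nat.card (AddAction.orbitRel.Quotient G (OddString G)) * Nat.card G =
      ∑ k : G, if Odd (addOrderOf k) then 2 ^ (Nat.card G / addOrderOf k - 1) else 0 := by
  classical
  have := Fintype.ofFinite (AddAction.orbitRel.Quotient G (OddString G))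
  calc _ = ∑ k : G, Nat.card (AddAction.fixedBy (OddString G) k) := by
        simp only [Nat.card_eq_fintype_card]
        exact (AddAction.sum_card_fixedBy_eq_card_orbits_mul_card_addGroup G (OddString G)).symm
    _ = _ := sum_congr rfl fun k _ => card_fixedBy k

theorem IsAddCyclic.sum_addOrderOf [IsAddCyclic G] {M : Type*} [AddCommMonoid M] (φ : ℕ → M) :
    ∑ k : G, φ (addOrderOf k) = ∑ d ∈ (Nat.card G).divisors, d.totient • φ d := by
  classical
  rw [← sum_fiberwise_of_maps_to (g := addOrderOf) (t := (Nat.card G).divisors)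
    fun k _ => Nat.mem_divisors.mpr ⟨addOrderOf_dvd_natCard k, Nat.card_pos.ne'⟩]
  refine sum_congr rfl fun d hd => ?_
  rw [sum_congr rfl fun k hk => by rw [(mem_filter.mp hk).2], sum_const,
    IsAddCyclic.card_addOrderOf_eq_totient]
  simpa [Nat.card_eq_fintype_card] using Nat.dvd_of_mem_divisors hd

theorem OddString.card_orbits_mul_card_of_isAddCyclic [IsAddCyclic G] :
    Nat.card (AddAction.orbitRel.Quotient G (OddString G)) * Nat.card G =
      ∑ d ∈ (Nat.card G).divisors with Odd d, d.totient * 2 ^ (Nat.card G / d - 1) := by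
  rw [card_orbits_mul_card,
    IsAddCyclic.sum_addOrderOf fun d => if Odd d then 2 ^ (Nat.card G / d - 1) else 0, sum_filter]
  exact sum_congr rfl fun d _ => by split_ifs <;> simp

end Burnside

section Necklace

open Fin.CommRing

variable {n : ℕ}

instance Fin.isAddCyclic [NeZero n] : IsAddCyclic (Fin n) := ⟨1, fun k => ⟨k.val, by simp⟩⟩

theorem finRotate_pow_apply [NeZero n] (k : ℕ) (i : Fin n) : (finRotate n ^ k) i = i + k := by
  induction k generalizing i with
  | zero => simp
  | succ k ih => rw [pow_succ, Equiv.Perm.mul_apply, finRotate_apply, ih]; push_cast; ring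

theorem necklaceRel_add [NeZero n] (f : Fin n → Bool) (k : Fin n) :
    necklaceRel n f fun i => f (i + k) :=
  ⟨k.val, funext fun i => by simp [finRotate_pow_apply]⟩

theorem weight_eq_of_necklaceRel {f g : Fin n → Bool} (h : necklaceRel n f g) :
    weight g = weight f := by
  obtain ⟨k, rfl⟩ := h
  exact weight_comp_equiv f _

def IsOddNecklace (n : ℕ) : Quot (necklaceRel n) → Prop :=
  Quot.lift (fun f => Odd (weight f)) fun _ _ h => by rw [weight_eq_of_necklaceRel h]

theorem odd_weight_iff_not_of_dBArc {f g : Fin n → Bool} (harc : dBArc n f g)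
    (hne : Quot.mk (necklaceRel n) f ≠ Quot.mk _ g) : Odd (weight g) ↔ ¬Odd (weight f) := by
  cases n with
  | zero => exact absurd (congrArg _ (Subsingleton.elim f g)) hne
  | succ m =>
    set f' := f ∘ finRotate (m + 1)
    have hshift : ∀ i ≠ Fin.last m, g i = f' i := fun i hi => by
      rw [harc i (by simpa using Fin.val_lt_last hi)]
      exact congrArg f (Fin.ext (coe_finRotate_of_ne_last hi).symm)
    have hg : g = update f' (Fin.last m) (g (Fin.last m)) := eq_update_iff.mpr ⟨rfl, hshift⟩
    have hlast : g (Fin.last m) = !f' (Fin.last m) := Bool.eq_not_iff.mpr fun h =>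
      hne <| Quot.sound ⟨1, by rw [hg, h, update_eq_self, pow_one]⟩
    rw [hg, hlast, odd_weight_update_not, weight_comp_equiv]

theorem isOddNecklace_iff_not_of_adj {X Y : Quot (necklaceRel n)} (h : (NG n).Adj X Y) :
    ¬(IsOddNecklace n X ↔ IsOddNecklace n Y) := by
  obtain ⟨hne, f, g, rfl, rfl, harc | harc⟩ := h
  · have := odd_weight_iff_not_of_dBArc harc hne
    exact fun hiff : Odd (weight f) ↔ Odd (weight g) => by tauto
  · have := odd_weight_iff_not_of_dBArc harc hne.symm
    exact fun hiff : Odd (weight f) ↔ Odd (weight g) => by tauto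

theorem card_isOddNecklace_le [NeZero n] :
    Nat.card {X // IsOddNecklace n X} ≤
      Nat.card (AddAction.orbitRel.Quotient (Fin n) (OddString (Fin n))) := by
  refine Nat.card_le_card_of_surjective
    (Quotient.lift
      (fun x : OddString (Fin n) => (⟨Quot.mk _ x.1, x.2⟩ : {X // IsOddNecklace n X}))
      fun x y hxy => ?_) fun ⟨X, hX⟩ => ?_
  · obtain ⟨k, rfl⟩ := hxy
    exact Subtype.ext (Quot.sound (necklaceRel_add y.1 k)).symm
  · induction X using Quot.ind with
    | mk f => exact ⟨Quotient.mk _ ⟨f, hX⟩, rfl⟩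

theorem BPL_eq_two_mul_card_orbits_add_one [NeZero n] :
    BPL n = 2 * Nat.card (AddAction.orbitRel.Quotient (Fin n) (OddString (Fin n))) + 1 := by
  have horbits := OddString.card_orbits_mul_card_of_isAddCyclic (G := Fin n)
  rw [Nat.card_fin] at horbits
  have hdouble : ∑ d ∈ n.divisors with Odd d, d.totient * 2 ^ (n / d) =
      2 * ∑ d ∈ n.divisors with Odd d, d.totient * 2 ^ (n / d - 1) := by
    rw [mul_sum]
    refine sum_congr rfl fun d hd => ?_
    have hdvd := Nat.dvd_of_mem_divisors (mem_filter.mp hd).1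
    have : 0 < n / d := Nat.div_pos (Nat.le_of_dvd (NeZero.pos n) hdvd)
      (Nat.pos_of_dvd_of_pos hdvd (NeZero.pos n))
    rw [← Nat.sub_add_cancel this, pow_succ, Nat.add_sub_cancel]
    ring
  rw [BPL, hdouble, ← horbits, ← mul_assoc, Nat.mul_div_cancel _ (NeZero.pos n)]

end Necklace

theorem NG_path_bound_general (n : ℕ) (hn : 4 ≤ n) :
    ∀ (u v : Quot (necklaceRel n)) (p : (NG n).Walk u v),
      p.IsPath → p.support.length ≤ BPL n := by
  have : NeZero n := ⟨by omega⟩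
  intro u v p hp
  calc p.support.length ≤ 2 * Nat.card {X // IsOddNecklace n X} + 1 :=
        hp.length_support_le _ fun _ _ => isOddNecklace_iff_not_of_adj
    _ ≤ 2 * Nat.card (AddAction.orbitRel.Quotient (Fin n) (OddString (Fin n))) + 1 := by
        gcongr
        exact card_isOddNecklace_le
    _ = BPL n := BPL_eq_two_mul_card_orbits_add_one.symm

theorem NG_path_bound (n : ℕ) (hn : 4 ≤ n) (he : Even n) :
    ∀ (u v : Quot (necklaceRel n)) (p : (NG n).Walk u v),
      p.IsPath → p.support.length ≤ BPL n :=
  NG_path_bound_general n hn
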